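/- Let n ≥ 2, let A be a synchronizing automaton over Fin n, and let Φ = (α, ℓ) be an automorphism of the underlying digraph of A. Let s, t, p ∈ Q_A satisfy: (a) π x s = p for some x ∈ Fin n; (b) for all i, j ∈ ℕ and all x ∈ Fin n, π x (α^i s) = α^j p if and only if π x (α^i t) = α^j p; (c) the Φ-orbits of s and t are disjoint and have equal length; (d) for all x ∈ Fin n and j ∈ ℕ with π x s = α^j p, the edges (s, x) and (t, x) have equal orbit lengths under Φ. Then there is a family ρ assigning to each state q of A a permutation ρ_q of Fin n with π (ρ_q x) q = π x q for all x, such that the automorphism Φ' = (α, ℓ') of the underlying digraph of A defined by ℓ' q = ρ_{α q} ∘ ℓ q ∘ (ρ_q)⁻¹ satisfies: for all i, j ∈ ℕ and every x ∈ Fin n with π x (α^i s) = α^j p, one has ℓ' (α^i s) x = ℓ' (α^i t) x (the Φ'-images of the corresponding edges from α^i s and α^i t carry the same label). -/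

import Mathlib

/-- The one-sided shift map on `(Fin n)^ℕ`: `(σ x) i = x (i+1)`. -/
def shiftMap (n : ℕ) : (ℕ → Fin n) → (ℕ → Fin n) := fun x i => x (i + 1)

/-- `b` has orbit length exactly `N` under `f`: `N` is the least `L ≥ 1` with `f^[L] b = b`. -/
def HasOrbitLen {β : Type*} (f : β → β) (b : β) (N : ℕ) : Prop :=
  IsLeast {L : ℕ | 0 < L ∧ f^[L] b = b} N

/-- An automorphism of the one-sided shift: a homeomorphism commuting with the shift. -/
def IsShiftAut (n : ℕ) (φ : (ℕ → Fin n) ≃ₜ (ℕ → Fin n)) : Prop :=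
  ⇑φ ∘ shiftMap n = shiftMap n ∘ ⇑φ

/-- `φ` has finite order. -/
def FiniteOrderAut (n : ℕ) (φ : (ℕ → Fin n) ≃ₜ (ℕ → Fin n)) : Prop :=
  ∃ m : ℕ, 0 < m ∧ (⇑φ)^[m] = id

/-- Extension of the transition function of an automaton to words (letters read in order). -/
def transStar {n : ℕ} {Q : Type*} (π : Fin n → Q → Q) : List (Fin n) → Q → Q
  | [], q => q
  | x :: w, q => transStar π w (π x q)

/-- The automaton `(Q, π)` is synchronizing at level `k` with synchronizing map `s`. -/
def SyncAtLevelWith {n : ℕ} {Q : Type*} (π : Fin n → Q → Q) (k : ℕ)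
    (s : List (Fin n) → Q) : Prop :=
  ∀ w : List (Fin n), w.length = k → ∀ q : Q, transStar π w q = s w

/-- The synchronizing map `s` at level `k` is surjective (the automaton is core). -/
def CoreAt {n : ℕ} {Q : Type*} (s : List (Fin n) → Q) (k : ℕ) : Prop :=
  ∀ q : Q, ∃ w : List (Fin n), w.length = k ∧ s w = q

/-- An automorphism of the underlying digraph of the automaton `(Q, π)`. -/
structure DigraphAut {Q : Type*} (n : ℕ) (π : Fin n → Q → Q) where
  α : Q ≃ Q
  lab : Q → Equiv.Perm (Fin n)
  compat : ∀ (x : Fin n) (q : Q), π (lab q x) (α q) = α (π x q)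

/-- Action of a digraph automorphism on the edge set `Q × Fin n`. -/
def edgeMap {Q : Type*} {n : ℕ} {π : Fin n → Q → Q} (Φ : DigraphAut n π) :
    Q × Fin n → Q × Fin n :=
  fun e => (Φ.α e.1, Φ.lab e.1 e.2)

/-- The output word map `Λ` of a digraph automorphism. -/
def outWord {Q : Type*} {n : ℕ} (π : Fin n → Q → Q) (lab : Q → Equiv.Perm (Fin n)) :
    List (Fin n) → Q → List (Fin n)
  | [], _ => []
  | x :: w, q => lab q x :: outWord π lab w (π x q)

/-- Action of a digraph automorphism on based circuits: `(q, w) ↦ (α q, Λ(w, q))`. -/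
def circMap {Q : Type*} {n : ℕ} {π : Fin n → Q → Q} (Φ : DigraphAut n π) :
    Q × List (Fin n) → Q × List (Fin n) :=
  fun c => (Φ.α c.1, outWord π Φ.lab c.2 c.1)

/-- `(q, w)` is a based circuit: `w` nonempty and `π*(w, q) = q`. -/
def IsBasedCircuit {Q : Type*} {n : ℕ} (π : Fin n → Q → Q) (c : Q × List (Fin n)) : Prop :=
  c.2 ≠ [] ∧ transStar π c.2 c.1 = c.1

/-- The sliding block code induced by an automaton synchronizing at level `k`
with synchronizing map `s` and digraph automorphism with labelling `lab`:
`(F x) i = lab q_i (x i)` where `q_i = s [x(i+k), x(i+k-1), …, x(i+1)]`. -/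
def inducedMap {Q : Type*} {n : ℕ} (k : ℕ) (s : List (Fin n) → Q)
    (lab : Q → Equiv.Perm (Fin n)) : (ℕ → Fin n) → (ℕ → Fin n) :=
  fun x i => lab (s (List.ofFn fun j : Fin k => x (i + k - (j : ℕ)))) (x i)

/-- `(A, Φ)` (with `A` synchronizing and core) is a support of the shift automorphism `φ`. -/
def IsSupport {Q : Type*} (n : ℕ) (π : Fin n → Q → Q) (Φ : DigraphAut n π)
    (φ : (ℕ → Fin n) ≃ₜ (ℕ → Fin n)) : Prop :=
  ∃ (k : ℕ) (s : List (Fin n) → Q), SyncAtLevelWith π k s ∧ CoreAt s k ∧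
    inducedMap k s Φ.lab = ⇑φ

/-- The permutation automorphism of the shift induced by a permutation of `Fin n`. -/
def permAutMap {n : ℕ} (ρ : Equiv.Perm (Fin n)) : (ℕ → Fin n) → (ℕ → Fin n) :=
  fun x i => ρ (x i)

/-- `t` is heavy for `(A, Φ, N)` with divisibility constant `b`. -/
def Heavy {Q : Type*} {n : ℕ} (π : Fin n → Q → Q) (Φ : DigraphAut n π)
    (N b : ℕ) (t : Q) : Prop :=
  b ∣ N ∧ b ≠ N ∧ (∀ r : ℕ, HasOrbitLen (⇑Φ.α) t r → r ∣ b) ∧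
  ∀ (q : Q) (x : Fin n), π x q = t →
    ∀ L : ℕ, HasOrbitLen (edgeMap Φ) (q, x) L → Nat.lcm L b = N

lemma horb_dvd {β : Type*} {f : β → β} {b : β} {N : ℕ} (h : HasOrbitLen f b N) :
    ∀ m : ℕ, f^[m] b = b ↔ N ∣ m := by
  obtain ⟨⟨hNpos, hNfix⟩, hleast⟩ := h
  intro m
  constructor
  · intro hm
    rcases Nat.eq_zero_or_pos m with rfl | hmpos
    · exact dvd_zero N
    have hg : Function.IsPeriodicPt f (Nat.gcd N m) b :=
      (Function.IsPeriodicPt.gcd hNfix hm)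
    have hgpos : 0 < Nat.gcd N m := Nat.gcd_pos_of_pos_left _ hNpos
    have : N ≤ Nat.gcd N m := hleast ⟨hgpos, hg⟩
    have h2 : Nat.gcd N m = N := le_antisymm (Nat.gcd_le_left _ hNpos) this
    exact h2 ▸ Nat.gcd_dvd_right N m
  · rintro ⟨c, rfl⟩
    have hp : Function.IsPeriodicPt f N b := hNfix
    exact hp.mul_const c

lemma perm_per_pos {X : Type*} [Finite X] (g : Equiv.Perm X) (x : X) :
    0 < Function.minimalPeriod (⇑g) x := by
  have h : Function.IsPeriodicPt (⇑g) (orderOf g) x := by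
    show (⇑g)^[orderOf g] x = x
    rw [Equiv.Perm.iterate_eq_pow, pow_orderOf_eq_one]
    rfl
  exact h.minimalPeriod_pos (orderOf_pos g)

lemma perm_per_dvd_iff {X : Type*} (g : Equiv.Perm X) (x : X) (k : ℕ) :
    (g ^ k) x = x ↔ Function.minimalPeriod (⇑g) x ∣ k := by
  rw [← Equiv.Perm.iterate_eq_pow]
  exact Function.isPeriodicPt_iff_minimalPeriod_dvd

lemma perm_pow_mod {X : Type*} (g : Equiv.Perm X) (x : X) (k : ℕ) :
    (g ^ k) x = (g ^ (k % Function.minimalPeriod (⇑g) x)) x := by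
  rw [← Equiv.Perm.iterate_eq_pow, ← Equiv.Perm.iterate_eq_pow]
  exact (Function.iterate_mod_minimalPeriod_eq).symm

section Orbit

variable {X : Type*} [Fintype X] [DecidableEq X] (g : Equiv.Perm X) (x₀ : X)

/-- the `g`-orbit of `x₀` as a finset -/
noncomputable def permOrbit : Finset X :=
  (Finset.range (Function.minimalPeriod (⇑g) x₀)).image fun k => (g ^ k) x₀

lemma permOrbit_mem_iff (z : X) :
    z ∈ permOrbit g x₀ ↔ ∃ k < Function.minimalPeriod (⇑g) x₀, (g ^ k) x₀ = z := by
  simp [permOrbit, Finset.mem_image, Finset.mem_range]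

lemma perm_pow_injOn {a b : ℕ} (ha : a < Function.minimalPeriod (⇑g) x₀)
    (hb : b < Function.minimalPeriod (⇑g) x₀) (h : (g ^ a) x₀ = (g ^ b) x₀) : a = b := by
  have := Function.iterate_injOn_Iio_minimalPeriod (f := ⇑g) (x := x₀)
  exact this ha hb (by simpa [Equiv.Perm.iterate_eq_pow] using h)

lemma permOrbit_pow_mem [Finite X] (k : ℕ) : (g ^ k) x₀ ∈ permOrbit g x₀ := by
  rw [permOrbit_mem_iff]
  refine ⟨k % Function.minimalPeriod (⇑g) x₀,
    Nat.mod_lt _ (perm_per_pos g x₀), (perm_pow_mod g x₀ k).symm⟩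

lemma permOrbit_self_mem [Finite X] : x₀ ∈ permOrbit g x₀ := by
  simpa using permOrbit_pow_mem g x₀ 0

lemma permOrbit_apply_mem [Finite X] {z : X} (hz : z ∈ permOrbit g x₀) :
    g z ∈ permOrbit g x₀ := by
  rw [permOrbit_mem_iff] at hz
  obtain ⟨k, -, rfl⟩ := hz
  have : g ((g ^ k) x₀) = (g ^ (k + 1)) x₀ := by
    rw [pow_succ' g k]; rfl
  rw [this]; exact permOrbit_pow_mem g x₀ _

lemma permOrbit_apply_mem_rev [Finite X] {z : X} (hz : g z ∈ permOrbit g x₀) :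
    z ∈ permOrbit g x₀ := by
  rw [permOrbit_mem_iff] at hz ⊢
  obtain ⟨k, hk, hzk⟩ := hz
  set c := Function.minimalPeriod (⇑g) x₀ with hc
  have hcpos : 0 < c := perm_per_pos g x₀
  refine ⟨(k + (c - 1)) % c, Nat.mod_lt _ hcpos, ?_⟩
  have h1 : (g ^ ((k + (c - 1)) % c)) x₀ = (g ^ (k + (c - 1))) x₀ := (perm_pow_mod g x₀ _).symm
  rw [h1]
  apply g.injective
  have h2 : g ((g ^ (k + (c - 1))) x₀) = (g ^ (k + c)) x₀ := by
    rw [show k + c = (k + (c-1)) + 1 by omega, pow_succ' g]; rfl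
  have h3 : (g ^ c) x₀ = x₀ := (perm_per_dvd_iff g x₀ c).2 dvd_rfl
  rw [h2, pow_add]
  simp only [Equiv.Perm.mul_apply, h3, hzk]

lemma permOrbit_per {z : X} (hz : z ∈ permOrbit g x₀) :
    Function.minimalPeriod (⇑g) z = Function.minimalPeriod (⇑g) x₀ := by
  rw [permOrbit_mem_iff] at hz
  obtain ⟨k, -, rfl⟩ := hz
  have key : ∀ m : ℕ, (g ^ m) ((g ^ k) x₀) = (g ^ k) x₀ ↔ (g ^ m) x₀ = x₀ := by
    intro m
    have hcomm : (g ^ m) ((g ^ k) x₀) = (g ^ k) ((g ^ m) x₀) := by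
      rw [← Equiv.Perm.mul_apply, ← Equiv.Perm.mul_apply, ← pow_add, ← pow_add, Nat.add_comm]
    rw [hcomm]
    exact ⟨fun h => (g ^ k).injective h, fun h => by rw [h]⟩
  have h1 : Function.minimalPeriod (⇑g) ((g ^ k) x₀) ∣ Function.minimalPeriod (⇑g) x₀ := by
    rw [← perm_per_dvd_iff, key, perm_per_dvd_iff]
  have h2 : Function.minimalPeriod (⇑g) x₀ ∣ Function.minimalPeriod (⇑g) ((g ^ k) x₀) := by
    rw [← perm_per_dvd_iff, ← key, perm_per_dvd_iff]
  exact Nat.dvd_antisymm h1 h2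

lemma permOrbit_card : (permOrbit g x₀).card = Function.minimalPeriod (⇑g) x₀ := by
  rw [permOrbit, Finset.card_image_of_injOn, Finset.card_range]
  intro a ha b hb h
  exact perm_pow_injOn g x₀ (Finset.mem_range.1 ha) (Finset.mem_range.1 hb) h

end Orbit

section KeyConj

variable {X Y : Type*} [Fintype X] [DecidableEq X] [DecidableEq Y]

lemma keyConj_aux (A B : Equiv.Perm X) (fib : X → Y) (G : Finset X)
    (hshift : ∀ x ∈ G, ∀ y ∈ G, fib x = fib y → fib (A x) = fib (B y)) :
    ∀ N : ℕ, ∀ Gdom Gcod : Finset X, Gdom.card ≤ N → Gdom ⊆ G → Gcod ⊆ G →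
    (∀ x ∈ Gdom, B x ∈ Gdom) → (∀ y ∈ Gcod, A y ∈ Gcod) →
    (∀ (v : Y) (c : ℕ),
      (Gdom.filter fun x => fib x = v ∧ Function.minimalPeriod (⇑B) x = c).card
        = (Gcod.filter fun y => fib y = v ∧ Function.minimalPeriod (⇑A) y = c).card) →
    ∃ σ : X → X, Set.BijOn σ ↑Gdom ↑Gcod ∧ (∀ x ∈ Gdom, fib (σ x) = fib x) ∧
      (∀ x ∈ Gdom, σ (B x) = A (σ x)) := by
  intro N
  induction N with
  | zero =>
    intro Gdom Gcod hcard _ _ _ _ hcnt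
    have hdom : Gdom = ∅ := Finset.card_eq_zero.1 (Nat.le_zero.1 hcard)
    have hcod : Gcod = ∅ := by
      by_contra h
      obtain ⟨y, hy⟩ := Finset.nonempty_of_ne_empty h
      have := hcnt (fib y) (Function.minimalPeriod (⇑A) y)
      rw [hdom] at this
      simp only [Finset.filter_empty, Finset.card_empty] at this
      have hy' : y ∈ Gcod.filter fun z => fib z = fib y ∧
          Function.minimalPeriod (⇑A) z = Function.minimalPeriod (⇑A) y :=
        Finset.mem_filter.2 ⟨hy, rfl, rfl⟩
      have := Finset.card_pos.2 ⟨y, hy'⟩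
      omega
    subst hdom; subst hcod
    exact ⟨id, by simp [Set.BijOn], by simp, by simp⟩
  | succ N ih =>
    intro Gdom Gcod hcard hsubdom hsubcod hBdom hAcod hcnt
    rcases Finset.eq_empty_or_nonempty Gdom with rfl | ⟨x₀, hx₀⟩
    · -- same as base case
      have hcod : Gcod = ∅ := by
        by_contra h
        obtain ⟨y, hy⟩ := Finset.nonempty_of_ne_empty h
        have := hcnt (fib y) (Function.minimalPeriod (⇑A) y)
        simp only [Finset.filter_empty, Finset.card_empty] at this
        have hy' : y ∈ Gcod.filter fun z => fib z = fib y ∧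
            Function.minimalPeriod (⇑A) z = Function.minimalPeriod (⇑A) y :=
          Finset.mem_filter.2 ⟨hy, rfl, rfl⟩
        have := Finset.card_pos.2 ⟨y, hy'⟩
        omega
      subst hcod
      exact ⟨id, by simp [Set.BijOn], by simp, by simp⟩
    · set c := Function.minimalPeriod (⇑B) x₀ with hc
      have hcpos : 0 < c := perm_per_pos B x₀
      -- find y₀
      have hpos : 0 < (Gcod.filter fun y => fib y = fib x₀ ∧
          Function.minimalPeriod (⇑A) y = c).card := by
        rw [← hcnt]
        exact Finset.card_pos.2 ⟨x₀, Finset.mem_filter.2 ⟨hx₀, rfl, rfl⟩⟩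
      obtain ⟨y₀, hy₀f⟩ := Finset.card_pos.1 hpos
      obtain ⟨hy₀cod, hy₀fib, hy₀per⟩ := Finset.mem_filter.1 hy₀f
      classical
      set OB := permOrbit B x₀ with hOB
      set OA := permOrbit A y₀ with hOA
      have hOBcard : OB.card = c := by rw [hOB, permOrbit_card, hc]
      have hOAcard : OA.card = c := by rw [hOA, permOrbit_card, hy₀per]
      have hpowdom : ∀ k : ℕ, (B ^ k) x₀ ∈ Gdom := by
        intro k
        induction k with
        | zero => simpa using hx₀
        | succ k ihk =>
          have : (B ^ (k+1)) x₀ = B ((B ^ k) x₀) := by rw [pow_succ']; rfl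
          rw [this]; exact hBdom _ ihk
      have hpowcod : ∀ k : ℕ, (A ^ k) y₀ ∈ Gcod := by
        intro k
        induction k with
        | zero => simpa using hy₀cod
        | succ k ihk =>
          have : (A ^ (k+1)) y₀ = A ((A ^ k) y₀) := by rw [pow_succ']; rfl
          rw [this]; exact hAcod _ ihk
      have hOBsub : OB ⊆ Gdom := by
        intro z hz
        obtain ⟨k, -, rfl⟩ := (permOrbit_mem_iff B x₀ z).1 hz
        exact hpowdom k
      have hOAsub : OA ⊆ Gcod := by
        intro z hz
        obtain ⟨k, -, rfl⟩ := (permOrbit_mem_iff A y₀ z).1 hz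
        exact hpowcod k
      have hfibk : ∀ k : ℕ, fib ((A ^ k) y₀) = fib ((B ^ k) x₀) := by
        intro k
        induction k with
        | zero => simpa using hy₀fib
        | succ k ihk =>
          have e1 : (A ^ (k+1)) y₀ = A ((A ^ k) y₀) := by rw [pow_succ']; rfl
          have e2 : (B ^ (k+1)) x₀ = B ((B ^ k) x₀) := by rw [pow_succ']; rfl
          rw [e1, e2]
          exact hshift _ (hsubcod (hpowcod k)) _ (hsubdom (hpowdom k)) ihk
      have hperOB : ∀ z ∈ OB, Function.minimalPeriod (⇑B) z = c := by
        intro z hz; rw [hOB] at hz; rw [permOrbit_per B x₀ hz, hc]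
      have hperOA : ∀ z ∈ OA, Function.minimalPeriod (⇑A) z = c := by
        intro z hz; rw [hOA] at hz; rw [permOrbit_per A y₀ hz, hy₀per]
      -- the matching map on the B-orbit
      set m : X → X := fun z =>
        if h : ∃ k, k < c ∧ (B ^ k) x₀ = z then (A ^ h.choose) y₀ else z with hmdef
      have hm : ∀ k : ℕ, m ((B ^ k) x₀) = (A ^ k) y₀ := by
        intro k
        have hex : ∃ k', k' < c ∧ (B ^ k') x₀ = (B ^ k) x₀ := by
          refine ⟨k % c, ?_, ?_⟩
          · exact Nat.mod_lt _ hcpos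
          · conv_rhs => rw [perm_pow_mod B x₀ k, ← hc]
        have e1 : m ((B ^ k) x₀) = (A ^ hex.choose) y₀ := by
          rw [hmdef]; exact dif_pos hex
        obtain ⟨hlt, heq⟩ := hex.choose_spec
        have e2 : hex.choose = k % c := by
          apply perm_pow_injOn B x₀ (by rw [← hc]; exact hlt)
            (by rw [← hc]; exact Nat.mod_lt _ hcpos)
          rw [heq, perm_pow_mod B x₀ k, ← hc]
        rw [e1, e2]
        conv_rhs => rw [perm_pow_mod A y₀ k, hy₀per]
      -- apply the induction hypothesis to the complements
      have hdom' : ∀ z ∈ Gdom \ OB, B z ∈ Gdom \ OB := by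
        intro z hz
        rw [Finset.mem_sdiff] at hz ⊢
        refine ⟨hBdom _ hz.1, fun hmem => hz.2 ?_⟩
        exact permOrbit_apply_mem_rev B x₀ hmem
      have hcod' : ∀ z ∈ Gcod \ OA, A z ∈ Gcod \ OA := by
        intro z hz
        rw [Finset.mem_sdiff] at hz ⊢
        refine ⟨hAcod _ hz.1, fun hmem => hz.2 ?_⟩
        exact permOrbit_apply_mem_rev A y₀ hmem
      have hcnt' : ∀ (v : Y) (c' : ℕ),
          ((Gdom \ OB).filter fun x => fib x = v ∧ Function.minimalPeriod (⇑B) x = c').card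
            = ((Gcod \ OA).filter fun y => fib y = v ∧ Function.minimalPeriod (⇑A) y = c').card := by
        intro v c'
        have horb : (OB.filter fun x => fib x = v ∧ Function.minimalPeriod (⇑B) x = c').card
            = (OA.filter fun y => fib y = v ∧ Function.minimalPeriod (⇑A) y = c').card := by
          apply Finset.card_bij (fun z _ => m z)
          · intro z hz
            obtain ⟨hzOB, hzfib, hzper⟩ := Finset.mem_filter.1 hz
            obtain ⟨k, hk, rfl⟩ := (permOrbit_mem_iff B x₀ _).1 hzOB
            rw [hm k]
            refine Finset.mem_filter.2 ⟨?_, ?_, ?_⟩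
            · rw [hOA]
              exact permOrbit_pow_mem A y₀ k
            · rw [hfibk k]; exact hzfib
            · rw [hperOA _ (by rw [hOA]; exact permOrbit_pow_mem A y₀ k)]
              rw [← hzper, hperOB _ hzOB]
          · intro z hz w hw hzw
            obtain ⟨hzOB, -, -⟩ := Finset.mem_filter.1 hz
            obtain ⟨hwOB, -, -⟩ := Finset.mem_filter.1 hw
            obtain ⟨k, hk, rfl⟩ := (permOrbit_mem_iff B x₀ _).1 hzOB
            obtain ⟨k', hk', rfl⟩ := (permOrbit_mem_iff B x₀ _).1 hwOB
            rw [hm k, hm k'] at hzw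
            have : k = k' := perm_pow_injOn A y₀
              (by rw [hy₀per]; exact hk) (by rw [hy₀per]; exact hk') hzw
            rw [this]
          · intro w hw
            obtain ⟨hwOA, hwfib, hwper⟩ := Finset.mem_filter.1 hw
            obtain ⟨k, hk, rfl⟩ := (permOrbit_mem_iff A y₀ _).1 hwOA
            refine ⟨(B ^ k) x₀, ?_, hm k⟩
            refine Finset.mem_filter.2 ⟨?_, ?_, ?_⟩
            · rw [hOB]; exact permOrbit_pow_mem B x₀ k
            · rw [← hfibk k]; exact hwfib
            · rw [hperOB _ (by rw [hOB]; exact permOrbit_pow_mem B x₀ k)]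
              rw [← hwper, hperOA _ hwOA]
        have hfdom : ((Gdom \ OB).filter fun x => fib x = v ∧ Function.minimalPeriod (⇑B) x = c')
            = (Gdom.filter fun x => fib x = v ∧ Function.minimalPeriod (⇑B) x = c')
              \ (OB.filter fun x => fib x = v ∧ Function.minimalPeriod (⇑B) x = c') := by
          ext z
          simp only [Finset.mem_filter, Finset.mem_sdiff]
          tauto
        have hfcod : ((Gcod \ OA).filter fun y => fib y = v ∧ Function.minimalPeriod (⇑A) y = c')
            = (Gcod.filter fun y => fib y = v ∧ Function.minimalPeriod (⇑A) y = c')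
              \ (OA.filter fun y => fib y = v ∧ Function.minimalPeriod (⇑A) y = c') := by
          ext z
          simp only [Finset.mem_filter, Finset.mem_sdiff]
          tauto
        rw [hfdom, hfcod,
          Finset.card_sdiff_of_subset (Finset.filter_subset_filter _ hOBsub),
          Finset.card_sdiff_of_subset (Finset.filter_subset_filter _ hOAsub),
          hcnt v c', horb]
      have hcard' : (Gdom \ OB).card ≤ N := by
        rw [Finset.card_sdiff_of_subset hOBsub, hOBcard]
        omega
      obtain ⟨σ', hσ'bij, hσ'fib, hσ'int⟩ := ih (Gdom \ OB) (Gcod \ OA) hcard'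
        ((Finset.sdiff_subset).trans hsubdom) ((Finset.sdiff_subset).trans hsubcod)
        hdom' hcod' hcnt'
      -- assemble
      refine ⟨fun z => if z ∈ OB then m z else σ' z, ⟨?_, ?_, ?_⟩, ?_, ?_⟩
      · -- MapsTo
        intro z hz
        simp only [Finset.coe_sort_coe, Finset.mem_coe] at hz ⊢
        beta_reduce
        by_cases hzOB : z ∈ OB
        · rw [if_pos hzOB]
          obtain ⟨k, hk, rfl⟩ := (permOrbit_mem_iff B x₀ _).1 hzOB
          rw [hm k]
          exact hOAsub (permOrbit_pow_mem A y₀ k)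
        · rw [if_neg hzOB]
          have := hσ'bij.mapsTo (by simp only [Finset.mem_coe, Finset.mem_sdiff]; exact ⟨hz, hzOB⟩)
          simp only [Finset.mem_coe, Finset.mem_sdiff] at this
          exact this.1
      · -- InjOn
        intro z hz w hw hzw
        simp only [Finset.mem_coe] at hz hw
        beta_reduce at hzw
        by_cases hzOB : z ∈ OB <;> by_cases hwOB : w ∈ OB
        · rw [if_pos hzOB, if_pos hwOB] at hzw
          obtain ⟨k, hk, rfl⟩ := (permOrbit_mem_iff B x₀ _).1 hzOB
          obtain ⟨k', hk', rfl⟩ := (permOrbit_mem_iff B x₀ _).1 hwOB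
          rw [hm k, hm k'] at hzw
          have : k = k' := perm_pow_injOn A y₀
            (by rw [hy₀per]; exact hk) (by rw [hy₀per]; exact hk') hzw
          rw [this]
        · exfalso
          rw [if_pos hzOB, if_neg hwOB] at hzw
          obtain ⟨k, hk, rfl⟩ := (permOrbit_mem_iff B x₀ _).1 hzOB
          rw [hm k] at hzw
          have h1 : σ' w ∈ Gcod \ OA := by
            have := hσ'bij.mapsTo (by simp only [Finset.mem_coe, Finset.mem_sdiff]; exact ⟨hw, hwOB⟩)
            simpa only [Finset.mem_coe] using this
          rw [Finset.mem_sdiff] at h1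
          exact h1.2 (hzw ▸ permOrbit_pow_mem A y₀ k)
        · exfalso
          rw [if_neg hzOB, if_pos hwOB] at hzw
          obtain ⟨k, hk, rfl⟩ := (permOrbit_mem_iff B x₀ _).1 hwOB
          rw [hm k] at hzw
          have h1 : σ' z ∈ Gcod \ OA := by
            have := hσ'bij.mapsTo (by simp only [Finset.mem_coe, Finset.mem_sdiff]; exact ⟨hz, hzOB⟩)
            simpa only [Finset.mem_coe] using this
          rw [Finset.mem_sdiff] at h1
          exact h1.2 (hzw ▸ permOrbit_pow_mem A y₀ k)
        · rw [if_neg hzOB, if_neg hwOB] at hzw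
          exact hσ'bij.injOn (by simp only [Finset.mem_coe, Finset.mem_sdiff]; exact ⟨hz, hzOB⟩)
            (by simp only [Finset.mem_coe, Finset.mem_sdiff]; exact ⟨hw, hwOB⟩) hzw
      · -- SurjOn
        intro w hw
        simp only [Finset.mem_coe] at hw
        beta_reduce
        by_cases hwOA : w ∈ OA
        · obtain ⟨k, hk, rfl⟩ := (permOrbit_mem_iff A y₀ _).1 hwOA
          refine ⟨(B ^ k) x₀, ?_, ?_⟩
          · simp only [Finset.mem_coe]
            exact hpowdom k
          · beta_reduce
            rw [if_pos (permOrbit_pow_mem B x₀ k), hm k]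
        · have : w ∈ (Gcod \ OA : Finset X) := Finset.mem_sdiff.2 ⟨hw, hwOA⟩
          obtain ⟨z, hz, hzw⟩ := hσ'bij.surjOn (by simp only [Finset.mem_coe]; exact this)
          simp only [Finset.mem_coe, Finset.mem_sdiff] at hz
          refine ⟨z, by simp only [Finset.mem_coe]; exact hz.1, ?_⟩
          beta_reduce
          rw [if_neg hz.2]
          exact hzw
      · -- fib preservation
        intro z hz
        beta_reduce
        by_cases hzOB : z ∈ OB
        · rw [if_pos hzOB]
          obtain ⟨k, hk, rfl⟩ := (permOrbit_mem_iff B x₀ _).1 hzOB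
          rw [hm k]
          exact hfibk k
        · rw [if_neg hzOB]
          exact hσ'fib z (Finset.mem_sdiff.2 ⟨hz, hzOB⟩)
      · -- intertwining
        intro z hz
        beta_reduce
        by_cases hzOB : z ∈ OB
        · obtain ⟨k, hk, rfl⟩ := (permOrbit_mem_iff B x₀ _).1 hzOB
          have e2 : B ((B ^ k) x₀) = (B ^ (k+1)) x₀ := by rw [pow_succ']; rfl
          rw [if_pos hzOB, e2, if_pos (permOrbit_pow_mem B x₀ (k+1)), hm (k+1), hm k,
            pow_succ']
          rfl
        · have hBz : B z ∈ Gdom \ OB := hdom' z (Finset.mem_sdiff.2 ⟨hz, hzOB⟩)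
          rw [if_neg hzOB, if_neg (Finset.mem_sdiff.1 hBz).2]
          exact hσ'int z (Finset.mem_sdiff.2 ⟨hz, hzOB⟩)

lemma keyConj (A B : Equiv.Perm X) (fib : X → Y) (G : Finset X)
    (hBG : ∀ x ∈ G, B x ∈ G) (hAG : ∀ x ∈ G, A x ∈ G)
    (hshift : ∀ x ∈ G, ∀ y ∈ G, fib x = fib y → fib (A x) = fib (B y))
    (hper : ∀ x ∈ G, ∀ k : ℕ, (A ^ k) x = x ↔ (B ^ k) x = x) :
    ∃ σ : Equiv.Perm X, (∀ x, fib (σ x) = fib x) ∧ (∀ x ∈ G, σ (B x) = A (σ x)) := by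
  have hpereq : ∀ x ∈ G, Function.minimalPeriod (⇑A) x = Function.minimalPeriod (⇑B) x := by
    intro x hx
    refine Nat.dvd_antisymm ?_ ?_
    · rw [← perm_per_dvd_iff, hper x hx, perm_per_dvd_iff]
    · rw [← perm_per_dvd_iff, ← hper x hx, perm_per_dvd_iff]
  have hcnt : ∀ (v : Y) (c : ℕ),
      (G.filter fun x => fib x = v ∧ Function.minimalPeriod (⇑B) x = c).card
        = (G.filter fun y => fib y = v ∧ Function.minimalPeriod (⇑A) y = c).card := by
    intro v c
    congr 1
    apply Finset.filter_congr
    intro x hx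
    rw [hpereq x hx]
  obtain ⟨σG, hbij, hfib, hint⟩ := keyConj_aux A B fib G hshift G.card G G le_rfl
    subset_rfl subset_rfl hBG hAG hcnt
  have hmem : ∀ z, z ∈ G → σG z ∈ G := by
    intro z hz
    have := hbij.mapsTo (by simpa using hz)
    simpa using this
  have hinj : Function.Injective (fun z => if z ∈ G then σG z else z) := by
    intro z w hzw
    beta_reduce at hzw
    by_cases hz : z ∈ G <;> by_cases hw : w ∈ G
    · rw [if_pos hz, if_pos hw] at hzw
      exact hbij.injOn (by simpa using hz) (by simpa using hw) hzw
    · rw [if_pos hz, if_neg hw] at hzw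
      exact absurd (by rw [← hzw]; exact hmem z hz : w ∈ G) hw
    · rw [if_neg hz, if_pos hw] at hzw
      exact absurd (by rw [hzw]; exact hmem w hw : z ∈ G) hz
    · rw [if_neg hz, if_neg hw] at hzw
      exact hzw
  refine ⟨Equiv.ofBijective _ (Finite.injective_iff_bijective.mp hinj), ?_, ?_⟩
  · intro x
    show fib (if x ∈ G then σG x else x) = fib x
    by_cases hx : x ∈ G
    · rw [if_pos hx]; exact hfib x hx
    · rw [if_neg hx]
  · intro x hx
    show (if B x ∈ G then σG (B x) else B x) = A (if x ∈ G then σG x else x)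
    rw [if_pos (hBG x hx), if_pos hx]
    exact hint x hx

end KeyConj


section WordPerm

variable {Q : Type*} {n : ℕ} {π : Fin n → Q → Q}

/-- the permutation of letters obtained by following `m` steps of the orbit of `q`. -/
def wordPerm (Φ : DigraphAut n π) : ℕ → Q → Equiv.Perm (Fin n)
  | 0, _ => 1
  | (m+1), q => Φ.lab ((⇑Φ.α)^[m] q) * wordPerm Φ m q

lemma wordPerm_compat (Φ : DigraphAut n π) (m : ℕ) (q : Q) (x : Fin n) :
    π (wordPerm Φ m q x) ((⇑Φ.α)^[m] q) = (⇑Φ.α)^[m] (π x q) := by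
  induction m with
  | zero => rfl
  | succ m ih =>
    show π (Φ.lab ((⇑Φ.α)^[m] q) (wordPerm Φ m q x)) ((⇑Φ.α)^[m+1] q) = (⇑Φ.α)^[m+1] (π x q)
    rw [Function.iterate_succ_apply', Function.iterate_succ_apply', Φ.compat, ih]

lemma edgeMap_iterate (Φ : DigraphAut n π) (m : ℕ) (q : Q) (x : Fin n) :
    (edgeMap Φ)^[m] (q, x) = ((⇑Φ.α)^[m] q, wordPerm Φ m q x) := by
  induction m with
  | zero => rfl
  | succ m ih =>
    rw [Function.iterate_succ_apply', ih]
    show (Φ.α ((⇑Φ.α)^[m] q), Φ.lab ((⇑Φ.α)^[m] q) (wordPerm Φ m q x)) = _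
    rw [Function.iterate_succ_apply' (⇑Φ.α) m q]
    rfl

lemma wordPerm_add_period (Φ : DigraphAut n π) {L : ℕ} {q : Q} (hq : (⇑Φ.α)^[L] q = q)
    (i : ℕ) : wordPerm Φ (i + L) q = wordPerm Φ i q * wordPerm Φ L q := by
  induction i with
  | zero => simp [wordPerm]
  | succ i ih =>
    have e : i + 1 + L = (i + L) + 1 := by omega
    rw [e]
    show Φ.lab ((⇑Φ.α)^[i + L] q) * wordPerm Φ (i + L) q = wordPerm Φ (i + 1) q * wordPerm Φ L q
    rw [Function.iterate_add_apply, hq, ih, ← mul_assoc]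
    rfl

lemma wordPerm_mul_period (Φ : DigraphAut n π) {L : ℕ} {q : Q} (hq : (⇑Φ.α)^[L] q = q)
    (k : ℕ) : wordPerm Φ (k * L) q = (wordPerm Φ L q) ^ k := by
  induction k with
  | zero => simp [wordPerm]
  | succ k ih =>
    rw [Nat.succ_mul, wordPerm_add_period Φ hq, ih, pow_succ]

end WordPerm

lemma tij_arith (T i j : ℕ) (hT : 0 < T) : i + ((T-1)*i + j) = j + i * T := by
  cases T with
  | zero => omega
  | succ T' =>
    simp only [Nat.succ_sub_one]
    ring


section RelabelF

variable {Q : Type*} {n : ℕ} {π : Fin n → Q → Q}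

open Classical in
/-- the candidate relabelling permutation along the orbit of `t`. -/
noncomputable def relabelF (Φ : DigraphAut n π) (s t p : Q) (σ₀ : Equiv.Perm (Fin n))
    (i : ℕ) (x : Fin n) : Fin n :=
  if ∃ j, π x ((⇑Φ.α)^[i] t) = (⇑Φ.α)^[j] p then
    wordPerm Φ i s (σ₀ ((wordPerm Φ i t)⁻¹ x))
  else x

lemma relabelF_pos (Φ : DigraphAut n π) (s t p : Q) (σ₀ : Equiv.Perm (Fin n))
    (i : ℕ) (x : Fin n) (h : ∃ j, π x ((⇑Φ.α)^[i] t) = (⇑Φ.α)^[j] p) :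
    relabelF Φ s t p σ₀ i x = wordPerm Φ i s (σ₀ ((wordPerm Φ i t)⁻¹ x)) := by
  rw [relabelF, if_pos h]

lemma relabelF_neg (Φ : DigraphAut n π) (s t p : Q) (σ₀ : Equiv.Perm (Fin n))
    (i : ℕ) (x : Fin n) (h : ¬ ∃ j, π x ((⇑Φ.α)^[i] t) = (⇑Φ.α)^[j] p) :
    relabelF Φ s t p σ₀ i x = x := by
  rw [relabelF, if_neg h]

end RelabelF
theorem relabelling_along_two_orbits (n : ℕ) (hn : 2 ≤ n)
    (Q : Type) [Fintype Q] [Nonempty Q] (π : Fin n → Q → Q)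
    (hsync : ∃ (k : ℕ) (s₀ : List (Fin n) → Q), SyncAtLevelWith π k s₀)
    (Φ : DigraphAut n π) (s t p : Q)
    (ha : ∃ x : Fin n, π x s = p)
    (hb : ∀ (i j : ℕ) (x : Fin n),
      π x ((⇑Φ.α)^[i] s) = (⇑Φ.α)^[j] p ↔ π x ((⇑Φ.α)^[i] t) = (⇑Φ.α)^[j] p)
    (hc₁ : ∀ i : ℕ, (⇑Φ.α)^[i] s ≠ t)
    (hc₂ : ∃ L : ℕ, HasOrbitLen (⇑Φ.α) s L ∧ HasOrbitLen (⇑Φ.α) t L)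
    (hd : ∀ (x : Fin n) (j : ℕ), π x s = (⇑Φ.α)^[j] p →
      ∃ L : ℕ, HasOrbitLen (edgeMap Φ) (s, x) L ∧ HasOrbitLen (edgeMap Φ) (t, x) L) :
    ∃ ρ : Q → Equiv.Perm (Fin n),
      (∀ (q : Q) (x : Fin n), π (ρ q x) q = π x q) ∧
      (∀ (x : Fin n) (q : Q),
        π ((ρ (Φ.α q) * Φ.lab q * (ρ q)⁻¹) x) (Φ.α q) = Φ.α (π x q)) ∧
      (∀ (i j : ℕ) (x : Fin n), π x ((⇑Φ.α)^[i] s) = (⇑Φ.α)^[j] p →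
        (ρ (Φ.α ((⇑Φ.α)^[i] s)) * Φ.lab ((⇑Φ.α)^[i] s) * (ρ ((⇑Φ.α)^[i] s))⁻¹) x
          = (ρ (Φ.α ((⇑Φ.α)^[i] t)) * Φ.lab ((⇑Φ.α)^[i] t)
              * (ρ ((⇑Φ.α)^[i] t))⁻¹) x) := by
  classical
  obtain ⟨L, hLs, hLt⟩ := hc₂
  have hLpos : 0 < L := hLs.1.1
  have hsfix : (⇑Φ.α)^[L] s = s := hLs.1.2
  have htfix : (⇑Φ.α)^[L] t = t := hLt.1.2
  have hsdvd := horb_dvd hLs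
  have htdvd := horb_dvd hLt
  set T := orderOf Φ.α with hTdef
  have hTpos : 0 < T := orderOf_pos Φ.α
  have hTfix : ∀ q : Q, (⇑Φ.α)^[T] q = q := by
    intro q
    rw [Equiv.Perm.iterate_eq_pow, pow_orderOf_eq_one]
    rfl
  have hTmul : ∀ (k : ℕ) (q : Q), (⇑Φ.α)^[k * T] q = q := by
    intro k q
    rw [Nat.mul_comm, Function.iterate_mul]
    exact Function.iterate_fixed (hTfix q) k
  have hainj : ∀ (i : ℕ) (q r : Q), (⇑Φ.α)^[i] q = (⇑Φ.α)^[i] r → q = r :=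
    fun i q r h => Φ.α.injective.iterate i h
  -- unique preimages along the orbit of p
  have hpinv : ∀ (i j : ℕ) (z : Q), (⇑Φ.α)^[i] z = (⇑Φ.α)^[j] p →
      z = (⇑Φ.α)^[(T-1)*i + j] p := by
    intro i j z h
    apply hainj i
    rw [h, ← Function.iterate_add_apply,
      tij_arith T i j hTpos, Function.iterate_add_apply, hTmul i p]
  have hb0 : ∀ (j : ℕ) (x : Fin n), π x s = (⇑Φ.α)^[j] p ↔ π x t = (⇑Φ.α)^[j] p := by
    intro j x
    have := hb 0 j x
    simpa using this
  -- preimages of good letters under the word permutations along the t-orbit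
  have hBinv : ∀ (i : ℕ) (x : Fin n) (j : ℕ), π x ((⇑Φ.α)^[i] t) = (⇑Φ.α)^[j] p →
      π ((wordPerm Φ i t)⁻¹ x) t = (⇑Φ.α)^[(T-1)*i + j] p := by
    intro i x j h
    apply hpinv i
    have h2 := wordPerm_compat Φ i t ((wordPerm Φ i t)⁻¹ x)
    rw [(show ∀ (f : Equiv.Perm (Fin n)) (z : Fin n), f (f⁻¹ z) = z from fun f z => f.apply_symm_apply z)] at h2
    rw [← h2, h]
  -- the good set at the base point
  set G : Finset (Fin n) := Finset.univ.filter (fun x => ∃ j, π x t = (⇑Φ.α)^[j] p) with hGdef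
  have hGmem : ∀ x : Fin n, x ∈ G ↔ ∃ j, π x t = (⇑Φ.α)^[j] p := by
    intro x; simp [hGdef]
  -- keyConj hypotheses
  have hBG : ∀ x ∈ G, wordPerm Φ L t x ∈ G := by
    intro x hx
    obtain ⟨j, hj⟩ := (hGmem x).1 hx
    refine (hGmem _).2 ⟨L + j, ?_⟩
    have := wordPerm_compat Φ L t x
    rw [htfix] at this
    rw [this, hj, ← Function.iterate_add_apply]
  have hAG : ∀ x ∈ G, wordPerm Φ L s x ∈ G := by
    intro x hx
    obtain ⟨j, hj⟩ := (hGmem x).1 hx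
    refine (hGmem _).2 ⟨L + j, ?_⟩
    have hjs : π x s = (⇑Φ.α)^[j] p := (hb0 j x).2 hj
    have h2 := wordPerm_compat Φ L s x
    rw [hsfix] at h2
    refine (hb0 (L + j) _).1 ?_
    rw [h2, hjs, ← Function.iterate_add_apply]
  have hshift : ∀ x ∈ G, ∀ y ∈ G, π x t = π y t →
      π (wordPerm Φ L s x) t = π (wordPerm Φ L t y) t := by
    intro x hx y hy hxy
    obtain ⟨j, hj⟩ := (hGmem x).1 hx
    have hyj : π y t = (⇑Φ.α)^[j] p := by rw [← hxy, hj]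
    have hxs : π x s = (⇑Φ.α)^[j] p := (hb0 j x).2 hj
    have h2 := wordPerm_compat Φ L s x
    rw [hsfix] at h2
    have h3 := wordPerm_compat Φ L t y
    rw [htfix] at h3
    have h4 : π (wordPerm Φ L s x) t = (⇑Φ.α)^[L + j] p := by
      refine (hb0 (L + j) _).1 ?_
      rw [h2, hxs, ← Function.iterate_add_apply]
    rw [h4, h3, hyj, ← Function.iterate_add_apply]
  have hper : ∀ x ∈ G, ∀ k : ℕ, ((wordPerm Φ L s) ^ k) x = x ↔ ((wordPerm Φ L t) ^ k) x = x := by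
    intro x hx k
    obtain ⟨j, hj⟩ := (hGmem x).1 hx
    have hjs : π x s = (⇑Φ.α)^[j] p := (hb0 j x).2 hj
    obtain ⟨M, hMs, hMt⟩ := hd x j hjs
    have hes := horb_dvd hMs
    have het := horb_dvd hMt
    have claim : ∀ (q : Q), (⇑Φ.α)^[L] q = q → ∀ (hq : HasOrbitLen (edgeMap Φ) (q, x) M),
        (((wordPerm Φ L q) ^ k) x = x ↔ M ∣ k * L) := by
      intro q hqfix hq
      have hqd := horb_dvd hq
      constructor
      · intro h
        refine (hqd (k * L)).1 ?_
        rw [edgeMap_iterate, wordPerm_mul_period Φ hqfix, h]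
        have : (⇑Φ.α)^[k * L] q = q := by
          rw [Nat.mul_comm, Function.iterate_mul]
          exact Function.iterate_fixed hqfix k
        rw [this]
      · intro h
        have h2 := (hqd (k * L)).2 h
        rw [edgeMap_iterate, wordPerm_mul_period Φ hqfix] at h2
        exact (Prod.ext_iff.1 h2).2
    rw [claim s hsfix hMs, claim t htfix hMt]
  obtain ⟨σ₀, hσ₀fib, hσ₀int⟩ :=
    keyConj (wordPerm Φ L s) (wordPerm Φ L t) (fun x => π x t) G hBG hAG hshift hper
  -- conjugation property in the inverse form
  have hσ₀intL : ∀ y : Fin n, (∃ j, π y t = (⇑Φ.α)^[j] p) →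
      wordPerm Φ L s (σ₀ ((wordPerm Φ L t)⁻¹ y)) = σ₀ y := by
    intro y hy
    obtain ⟨j, hj⟩ := hy
    have hz : π ((wordPerm Φ L t)⁻¹ y) t = (⇑Φ.α)^[(T-1)*L + j] p := by
      have := hBinv L y j (by rw [htfix]; exact hj)
      exact this
    have hzG : (wordPerm Φ L t)⁻¹ y ∈ G := (hGmem _).2 ⟨_, hz⟩
    have := hσ₀int _ hzG
    rw [(show ∀ (f : Equiv.Perm (Fin n)) (z : Fin n), f (f⁻¹ z) = z from fun f z => f.apply_symm_apply z)] at this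
    rw [← this]
  -- fiber preservation of the building blocks
  have hFfib : ∀ (i : ℕ) (x : Fin n),
      π (relabelF Φ s t p σ₀ i x) ((⇑Φ.α)^[i] t) = π x ((⇑Φ.α)^[i] t) := by
    intro i x
    by_cases h : ∃ j, π x ((⇑Φ.α)^[i] t) = (⇑Φ.α)^[j] p
    · obtain ⟨j, hj⟩ := h
      rw [relabelF_pos Φ s t p σ₀ i x ⟨j, hj⟩]
      have hz : π ((wordPerm Φ i t)⁻¹ x) t = (⇑Φ.α)^[(T-1)*i + j] p := hBinv i x j hj
      have hz2 : π (σ₀ ((wordPerm Φ i t)⁻¹ x)) t = (⇑Φ.α)^[(T-1)*i + j] p := by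
        rw [hσ₀fib, hz]
      have hz3 : π (σ₀ ((wordPerm Φ i t)⁻¹ x)) s = (⇑Φ.α)^[(T-1)*i + j] p :=
        (hb0 _ _).2 hz2
      have h4 := wordPerm_compat Φ i s (σ₀ ((wordPerm Φ i t)⁻¹ x))
      rw [hz3, ← Function.iterate_add_apply,
        tij_arith T i j hTpos,
        Function.iterate_add_apply, hTmul i p] at h4
      rw [(hb i j _).1 h4, hj]
    · rw [relabelF_neg Φ s t p σ₀ i x h]
  have hFbij : ∀ i : ℕ, Function.Bijective (relabelF Φ s t p σ₀ i) := by
    intro i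
    apply Finite.injective_iff_bijective.mp
    intro x y hxy
    by_cases hx : ∃ j, π x ((⇑Φ.α)^[i] t) = (⇑Φ.α)^[j] p <;>
      by_cases hy : ∃ j, π y ((⇑Φ.α)^[i] t) = (⇑Φ.α)^[j] p
    · rw [relabelF_pos Φ s t p σ₀ i x hx, relabelF_pos Φ s t p σ₀ i y hy] at hxy
      have := (wordPerm Φ i t)⁻¹.injective (σ₀.injective ((wordPerm Φ i s).injective hxy))
      exact this
    · exfalso
      apply hy
      obtain ⟨j, hj⟩ := hx
      refine ⟨j, ?_⟩
      rw [relabelF_neg Φ s t p σ₀ i y hy] at hxy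
      have := hFfib i x
      rw [hxy] at this
      rw [this]; exact hj
    · exfalso
      apply hx
      obtain ⟨j, hj⟩ := hy
      refine ⟨j, ?_⟩
      rw [relabelF_neg Φ s t p σ₀ i x hx] at hxy
      have := hFfib i y
      rw [← hxy] at this
      rw [this]; exact hj
    · rw [relabelF_neg Φ s t p σ₀ i x hx, relabelF_neg Φ s t p σ₀ i y hy] at hxy
      exact hxy
  set σ : ℕ → Equiv.Perm (Fin n) := fun i => Equiv.ofBijective _ (hFbij i) with hσdef
  have hcoe : ∀ (i : ℕ) (x : Fin n), σ i x = relabelF Φ s t p σ₀ i x := fun i x => rfl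
  have hσper : ∀ i : ℕ, σ (i + L) = σ i := by
    intro i
    apply Equiv.ext
    intro x
    rw [hcoe, hcoe]
    have hstate : (⇑Φ.α)^[i+L] t = (⇑Φ.α)^[i] t := by
      rw [Function.iterate_add_apply, htfix]
    by_cases h : ∃ j, π x ((⇑Φ.α)^[i] t) = (⇑Φ.α)^[j] p
    · have h' : ∃ j, π x ((⇑Φ.α)^[i+L] t) = (⇑Φ.α)^[j] p := by rw [hstate]; exact h
      rw [relabelF_pos Φ s t p σ₀ (i+L) x h', relabelF_pos Φ s t p σ₀ i x h]
      rw [wordPerm_add_period Φ hsfix i, wordPerm_add_period Φ htfix i]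
      simp only [mul_inv_rev, Equiv.Perm.mul_apply]
      congr 1
      obtain ⟨j, hj⟩ := h
      exact hσ₀intL ((wordPerm Φ i t)⁻¹ x) ⟨_, hBinv i x j hj⟩
    · have h' : ¬ ∃ j, π x ((⇑Φ.α)^[i+L] t) = (⇑Φ.α)^[j] p := by rw [hstate]; exact h
      rw [relabelF_neg Φ s t p σ₀ (i+L) x h', relabelF_neg Φ s t p σ₀ i x h]
  have hσcongr : ∀ i i' : ℕ, (⇑Φ.α)^[i] t = (⇑Φ.α)^[i'] t → σ i = σ i' := by
    have key : ∀ i d : ℕ, L ∣ d → σ (i + d) = σ i := by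
      intro i d hd
      obtain ⟨k, rfl⟩ := hd
      induction k with
      | zero => simp
      | succ k ih =>
        rw [show i + L * (k + 1) = (i + L * k) + L by ring, hσper, ih]
    have main : ∀ i i' : ℕ, i ≤ i' → (⇑Φ.α)^[i] t = (⇑Φ.α)^[i'] t → σ i = σ i' := by
      intro i i' hle heq
      have hd : (⇑Φ.α)^[i' - i] t = t := by
        apply hainj i
        rw [← Function.iterate_add_apply, show i + (i' - i) = i' by omega, ← heq]
      have : L ∣ i' - i := (htdvd _).1 hd
      have := key i (i' - i) this
      rw [show i + (i' - i) = i' by omega] at this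
      exact this.symm
    intro i i' heq
    rcases Nat.le_total i i' with h | h
    · exact main i i' h heq
    · exact (main i' i h heq.symm).symm
  -- the relabelling family
  set ρ : Q → Equiv.Perm (Fin n) := fun q =>
    if h : ∃ k, (⇑Φ.α)^[k] t = q then σ h.choose else 1 with hρdef
  have hρt : ∀ i : ℕ, ρ ((⇑Φ.α)^[i] t) = σ i := by
    intro i
    have h : ∃ k, (⇑Φ.α)^[k] t = (⇑Φ.α)^[i] t := ⟨i, rfl⟩
    rw [hρdef]
    beta_reduce
    rw [dif_pos h]
    exact hσcongr _ i h.choose_spec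
  have hρs : ∀ i : ℕ, ρ ((⇑Φ.α)^[i] s) = 1 := by
    intro i
    have h : ¬ ∃ k, (⇑Φ.α)^[k] t = (⇑Φ.α)^[i] s := by
      rintro ⟨k, hk⟩
      have h1 : (⇑Φ.α)^[(T-1)*k] ((⇑Φ.α)^[k] t) = t := by
        rw [← Function.iterate_add_apply, show (T-1)*k + k = k * T by
          have h2 := tij_arith T k 0 hTpos
          omega]
        exact hTmul k t
      rw [hk, ← Function.iterate_add_apply] at h1
      exact hc₁ _ h1
    rw [hρdef]
    beta_reduce
    rw [dif_neg h]
  have hR1 : ∀ (q : Q) (x : Fin n), π (ρ q x) q = π x q := by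
    intro q x
    by_cases h : ∃ k, (⇑Φ.α)^[k] t = q
    · obtain ⟨k, hk⟩ := h
      rw [← hk, hρt k, hcoe]
      exact hFfib k x
    · rw [hρdef]
      beta_reduce
      rw [dif_neg h]
      simp
  refine ⟨ρ, hR1, ?_, ?_⟩
  · intro x q
    simp only [Equiv.Perm.mul_apply]
    have e1 : π ((ρ q)⁻¹ x) q = π x q := by
      have h0 := hR1 q ((ρ q)⁻¹ x)
      rw [(show ∀ (f : Equiv.Perm (Fin n)) (z : Fin n), f (f⁻¹ z) = z from fun f z => f.apply_symm_apply z)] at h0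
      exact h0.symm
    rw [hR1 (Φ.α q) _, Φ.compat, e1]
  · intro i j x hx
    have hxt : π x ((⇑Φ.α)^[i] t) = (⇑Φ.α)^[j] p := (hb i j x).1 hx
    have es : Φ.α ((⇑Φ.α)^[i] s) = (⇑Φ.α)^[i+1] s := (Function.iterate_succ_apply' _ i s).symm
    have et : Φ.α ((⇑Φ.α)^[i] t) = (⇑Φ.α)^[i+1] t := (Function.iterate_succ_apply' _ i t).symm
    rw [es, et, hρs i, hρs (i+1), hρt i, hρt (i+1)]
    simp only [one_mul, inv_one, mul_one, Equiv.Perm.mul_apply]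
    -- compute the right-hand side
    set y : Fin n := (σ i)⁻¹ x with hydef
    have h5 : (σ i) y = x := (σ i).apply_symm_apply _
    have hy : π y ((⇑Φ.α)^[i] t) = (⇑Φ.α)^[j] p := by
      have h6 := hFfib i y
      rw [← hcoe i y, h5] at h6
      exact h6.symm.trans hxt
    have hcond : π (Φ.lab ((⇑Φ.α)^[i] t) y) ((⇑Φ.α)^[i+1] t) = (⇑Φ.α)^[j+1] p := by
      rw [Function.iterate_succ_apply' (⇑Φ.α) i t, Φ.compat, hy,
        ← Function.iterate_succ_apply' (⇑Φ.α) j p]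
    rw [hcoe (i+1), relabelF_pos Φ s t p σ₀ (i+1) _ ⟨j+1, hcond⟩]
    have eB : wordPerm Φ (i+1) t = Φ.lab ((⇑Φ.α)^[i] t) * wordPerm Φ i t := rfl
    have eA : wordPerm Φ (i+1) s = Φ.lab ((⇑Φ.α)^[i] s) * wordPerm Φ i s := rfl
    rw [eA, eB]
    simp only [mul_inv_rev, Equiv.Perm.mul_apply, (show ∀ (f : Equiv.Perm (Fin n)) (z : Fin n), f⁻¹ (f z) = z from fun f z => f.symm_apply_apply z)]
    have hfin : (wordPerm Φ i s) (σ₀ ((wordPerm Φ i t)⁻¹ y)) = x := by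
      rw [← relabelF_pos Φ s t p σ₀ i y ⟨j, hy⟩, ← hcoe i y]
      exact h5
    rw [hfin]
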